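/- arXiv:1504.08265 — 2 statements merged into one kernel-verified Lean document; each statement's English description precedes it below -/
import Mathlib

section
/- Let R'⊆{1,…,N} be a set of request indices such that for every two distinct i,j∈R' the quarter balls SQball(i) and SQball(j) are edge-disjoint. Then every feasible solution F satisfies |F| ≥ Σ_{i∈R'} ρ(i); in particular |opt| ≥ Σ_{i∈R'} ρ(i). -/
open Finset

/-- A replica is a pair `(v, t)` of a network node and a time. -/
abbrev Replica : Type := ℕ × ℕ

/-- A (directed) grid edge is a pair of replicas. -/
abbrev GEdge : Type := Replica × Replica

/-- Horizontal directed edge `((v,t),(v+1,t))`. -/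
def isHoriz (e : GEdge) : Prop := e.2 = (e.1.1 + 1, e.1.2)

/-- Vertical arc `((v,t),(v,t+1))`. -/
def isArc (e : GEdge) : Prop := e.2 = (e.1.1, e.1.2 + 1)

def isGridEdge (e : GEdge) : Prop := isHoriz e ∨ isArc e

/-- The quarter ball `B(r,ρ)`: replicas `(u,s)` with `u ≤ v`, `s ≤ t` and
`(v−u)+(t−s) ≤ ρ`. -/
def qball (r : Replica) (ρ : ℕ) : Set Replica :=
  {q | q.1 ≤ r.1 ∧ q.2 ≤ r.2 ∧ (r.1 - q.1) + (r.2 - q.2) ≤ ρ}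

/-- Grid edges with both endpoints in the quarter ball `B(r,ρ)`. -/
def ballEdge (r : Replica) (ρ : ℕ) (e : GEdge) : Prop :=
  isGridEdge e ∧ e.1 ∈ qball r ρ ∧ e.2 ∈ qball r ρ

/-- Two quarter balls are edge-disjoint if they share no grid edge. -/
def BallsEdgeDisjoint (r : Replica) (ρ : ℕ) (r' : Replica) (ρ' : ℕ) : Prop :=
  ∀ e : GEdge, ¬ (ballEdge r ρ e ∧ ballEdge r' ρ' e)

/-- The square `Sq(r,ρ) = [v−ρ,v] × [t−ρ,t]`. -/
def SqRect (r : Replica) (ρ : ℕ) : Set Replica :=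
  {q | r.1 - ρ ≤ q.1 ∧ q.1 ≤ r.1 ∧ r.2 - ρ ≤ q.2 ∧ q.2 ≤ r.2}

/-- Directed `L∞` distance `d∞(q,r)`: `max(v−u, t−s)` if `u ≤ v` and `s ≤ t`,
and `∞` otherwise. -/
def distInf (q r : Replica) : ℕ∞ :=
  if q.1 ≤ r.1 ∧ q.2 ≤ r.2 then ((max (r.1 - q.1) (r.2 - q.2) : ℕ) : ℕ∞) else ⊤

/-- The replicas of an edge set: `(0,0)` together with all endpoints of its edges. -/
def Repl (F : Finset GEdge) : Set Replica :=
  insert ((0, 0) : Replica) {q | ∃ e ∈ F, q = e.1 ∨ q = e.2}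

/-- The arcs of the vertical path at node `u` from time `s` to time `τ`. -/
def vertPath (u s τ : ℕ) : Finset GEdge :=
  (Finset.range (τ - s)).image (fun k => ((u, s + k), (u, s + k + 1)))

/-- The horizontal edges of the path at time `τ` from node `u` to node `w`. -/
def horizPath (τ u w : ℕ) : Finset GEdge :=
  (Finset.range (w - u)).image (fun k => ((u + k, τ), (u + k + 1, τ)))

/-- A directed path from `a` to `b` all of whose edges belong to `F`. -/
def PathIn (F : Finset GEdge) (a b : Replica) : Prop :=
  ∃ (L : ℕ) (f : ℕ → Replica), f 0 = a ∧ f L = b ∧ ∀ k < L, (f k, f (k + 1)) ∈ F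

/-- An execution of Algorithm `Square` on a request sequence
`r_1 = (v 1, t 1), …, r_N = (v N, t N)` (with `t 0 = 0` and nondecreasing times).
`sol i` is the edge set after handling request `i`; `ρ i` is the radius of
request `i`; `(u' i, s' i)` is its closest replica and `(us i, ss i)` its
serving replica.  The fields record the specification SQ1–SQ5. -/
structure SquareRun where
  N : ℕ
  v : ℕ → ℕ
  t : ℕ → ℕ
  ρ : ℕ → ℕ
  u' : ℕ → ℕ
  s' : ℕ → ℕ
  us : ℕ → ℕ
  ss : ℕ → ℕ
  sol : ℕ → Finset GEdge
  t_zero : t 0 = 0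
  t_mono : ∀ i j, i ≤ j → j ≤ N → t i ≤ t j
  sol_zero : sol 0 = ∅
  /-- SQ2: `ρ i` is a lower bound on the distance from every replica of the
  current solution (after the SQ1 additions) to `r_i`. -/
  rho_min : ∀ i, 1 ≤ i → i ≤ N →
    ∀ q ∈ Repl (sol (i - 1) ∪ vertPath 0 (t (i - 1)) (t i)),
      (ρ i : ℕ∞) ≤ distInf q (v i, t i)
  /-- SQ2: the closest replica belongs to the current solution. -/
  closest_mem : ∀ i, 1 ≤ i → i ≤ N →
    (u' i, s' i) ∈ Repl (sol (i - 1) ∪ vertPath 0 (t (i - 1)) (t i))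
  /-- SQ2: the closest replica attains the radius. -/
  closest_dist : ∀ i, 1 ≤ i → i ≤ N →
    distInf (u' i, s' i) (v i, t i) = (ρ i : ℕ∞)
  /-- SQ2: among replicas of node `u' i`, the closest replica is the latest. -/
  closest_late : ∀ i, 1 ≤ i → i ≤ N → ∀ s, s ≤ t i →
    (u' i, s) ∈ Repl (sol (i - 1) ∪ vertPath 0 (t (i - 1)) (t i)) → s ≤ s' i
  /-- SQ3: the serving replica is in the current solution and in `Sq(r_i, 5ρ i)`. -/
  serv_mem : ∀ i, 1 ≤ i → i ≤ N →
    (us i, ss i) ∈ Repl (sol (i - 1) ∪ vertPath 0 (t (i - 1)) (t i)) ∧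
      (us i, ss i) ∈ SqRect (v i, t i) (5 * ρ i)
  /-- SQ3: the serving node is leftmost. -/
  serv_min : ∀ i, 1 ≤ i → i ≤ N →
    ∀ q ∈ Repl (sol (i - 1) ∪ vertPath 0 (t (i - 1)) (t i)),
      q ∈ SqRect (v i, t i) (5 * ρ i) → us i ≤ q.1
  /-- SQ3: among those, the serving time is latest. -/
  serv_late : ∀ i, 1 ≤ i → i ≤ N →
    ∀ q ∈ Repl (sol (i - 1) ∪ vertPath 0 (t (i - 1)) (t i)),
      q ∈ SqRect (v i, t i) (5 * ρ i) → q.1 = us i → q.2 ≤ ss i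
  /-- SQ1 + SQ4 + SQ5: the edges added while handling request `i`. -/
  step : ∀ i, 1 ≤ i → i ≤ N →
    sol i = (sol (i - 1) ∪ vertPath 0 (t (i - 1)) (t i))
      ∪ vertPath (us i) (ss i) (t i) ∪ horizPath (t i) (us i) (v i)
      ∪ vertPath (us i) (t i) (t i + 4 * ρ i)

namespace SquareRun

variable (S : SquareRun)

/-- The `i`-th request replica. -/
def req (i : ℕ) : Replica := (S.v i, S.t i)

/-- The edges added in steps SQ4 and SQ5 while handling request `i`. -/
def added45 (i : ℕ) : Finset GEdge :=
  vertPath (S.us i) (S.ss i) (S.t i) ∪ horizPath (S.t i) (S.us i) (S.v i)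
    ∪ vertPath (S.us i) (S.t i) (S.t i + 4 * S.ρ i)

/-- Request `i` is covered if `v_i − u^s_i ≥ ρ(i)`. -/
def covered (i : ℕ) : Prop := S.ρ i ≤ S.v i - S.us i

def uncovered (i : ℕ) : Prop := ¬ S.covered i

/-- A feasible solution of the DMCD instance given by the requests of `S`. -/
def Feasible (F : Finset GEdge) : Prop :=
  (∀ e ∈ F, isGridEdge e) ∧
  (∀ i, 1 ≤ i → i ≤ S.N → PathIn F (0, 0) (S.req i)) ∧
  (∀ τ, τ < S.t S.N → ∃ w, ((w, τ), (w, τ + 1)) ∈ F)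

/-- `S.IsParent i j` means `parent(j) = i`:  `i` is the least index greater than
`j` such that `r_i` is uncovered and `SQball(j)`, `SQball(i)` are not
edge-disjoint. -/
def IsParent (i j : ℕ) : Prop :=
  1 ≤ j ∧ j < i ∧ i ≤ S.N ∧ S.uncovered j ∧ S.uncovered i ∧
    ¬ BallsEdgeDisjoint (S.req j) (S.ρ j) (S.req i) (S.ρ i) ∧
    ∀ k, j < k → k < i → S.uncovered k →
      BallsEdgeDisjoint (S.req j) (S.ρ j) (S.req k) (S.ρ k)

/-- A root: an uncovered request with no parent. -/
def IsRoot (i : ℕ) : Prop :=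
  1 ≤ i ∧ i ≤ S.N ∧ S.uncovered i ∧
    ∀ j, i < j → j ≤ S.N → S.uncovered j →
      BallsEdgeDisjoint (S.req i) (S.ρ i) (S.req j) (S.ρ j)

/-- `i ∈ Tree(iStar)`: one can go from `i` to `iStar` by repeatedly passing from
a child to its parent. -/
def InTree (i iStar : ℕ) : Prop :=
  Relation.ReflTransGen (fun a b => S.IsParent b a) i iStar

end SquareRun

/-!
A directed grid path from `(0,0)` to `r_i` raises the coordinate sum by one per edge and never
decreases a coordinate, so its last `ρ(i)` edges lie in the quarter ball `B(r_i, ρ(i))`; the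
path is long enough for this because the SQ2 distance from the replica `(0,0)` to `r_i` is at
least `ρ(i)`. A feasible `F` contains such a path to every request, so it has at least `ρ(i)`
edges inside `SQball(i)`, and for pairwise edge-disjoint balls these edge sets are disjoint.
-/

lemma isGridEdge.fst_le_snd {e : GEdge} (h : isGridEdge e) : e.1 ≤ e.2 := by
  obtain ⟨⟨v, t⟩, w⟩ := e
  rcases h with h | h <;> dsimp only [isHoriz, isArc] at h <;> subst h <;> simp

lemma isGridEdge.snd_sum {e : GEdge} (h : isGridEdge e) :
    e.2.1 + e.2.2 = e.1.1 + e.1.2 + 1 := by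
  obtain ⟨⟨v, t⟩, w⟩ := e
  rcases h with h | h <;> dsimp only [isHoriz, isArc] at h <;> subst h <;> dsimp only <;> omega

lemma mem_qball_of_le {q r : Replica} {ρ : ℕ} (hle : q ≤ r)
    (hsum : r.1 + r.2 ≤ q.1 + q.2 + ρ) :
    q ∈ qball r ρ := by
  obtain ⟨h1, h2⟩ := Prod.mk_le_mk.mp hle
  exact ⟨h1, h2, by omega⟩

section GridPath

variable {F : Finset GEdge} (hgrid : ∀ e ∈ F, isGridEdge e) {L : ℕ} {f : ℕ → Replica}
  (hf : ∀ k < L, (f k, f (k + 1)) ∈ F)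
include hgrid hf

lemma gridPath_sum {k : ℕ} (hk : k ≤ L) : (f k).1 + (f k).2 = (f 0).1 + (f 0).2 + k := by
  induction k with
  | zero => rfl
  | succ k ih => have := (hgrid _ (hf k hk)).snd_sum; simp only at this; omega

lemma gridPath_monotoneOn : MonotoneOn f (Set.Iic L) :=
  monotoneOn_of_le_succ Set.ordConnected_Iic fun k _ _ hk =>
    (hgrid _ (hf k (Order.succ_le_iff.mp hk))).fst_le_snd

lemma gridPath_injOn : (Set.Iic L).InjOn f := fun k hk m hm hkm => by
  have := gridPath_sum hgrid hf hk
  have := gridPath_sum hgrid hf hm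
  rw [hkm] at *
  omega

end GridPath

lemma PathIn.le_card_filter_ballEdge {F : Finset GEdge} (hgrid : ∀ e ∈ F, isGridEdge e)
    {a r : Replica} {ρ : ℕ} [DecidablePred (ballEdge r ρ)] (hp : PathIn F a r)
    (hρ : a.1 + a.2 + ρ ≤ r.1 + r.2) :
    ρ ≤ #(F.filter (ballEdge r ρ)) := by
  obtain ⟨L, f, rfl, rfl, hf⟩ := hp
  have hsum := gridPath_sum hgrid hf (le_refl L)
  have hmono := gridPath_monotoneOn hgrid hf
  have hlast {k : ℕ} (hk : L - ρ ≤ k) (hkL : k ≤ L) : f k ∈ qball (f L) ρ :=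
    mem_qball_of_le (hmono (Set.mem_Iic.mpr hkL) Set.self_mem_Iic hkL) <| by
      have := gridPath_sum hgrid hf hkL
      omega
  calc ρ = #(range ρ) := (card_range ρ).symm
    _ ≤ #(F.filter (ballEdge (f L) ρ)) := by
      refine card_le_card_of_injOn (fun k => (f (L - ρ + k), f (L - ρ + k + 1))) ?_ ?_
      · intro k hk
        have hk : k < ρ := mem_range.mp hk
        exact mem_filter.mpr ⟨hf _ (by omega), hgrid _ (hf _ (by omega)),
          hlast (by omega) (by omega), hlast (by omega) (by omega)⟩
      · intro k hk m hm hkm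
        have hk : k < ρ := mem_range.mp hk
        have hm : m < ρ := mem_range.mp hm
        have := gridPath_injOn hgrid hf (Set.mem_Iic.mpr (by omega))
          (Set.mem_Iic.mpr (by omega)) (Prod.ext_iff.mp hkm).1
        omega

namespace SquareRun

lemma rho_le_max (S : SquareRun) {i : ℕ} (hi : 1 ≤ i) (hiN : i ≤ S.N) :
    S.ρ i ≤ max (S.v i) (S.t i) := by
  have h := S.rho_min i hi hiN (0, 0) (Set.mem_insert _ _)
  simpa [distInf] using h

lemma Feasible.rho_le_card_filter_ballEdge {S : SquareRun} {F : Finset GEdge}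
    (hF : S.Feasible F) {i : ℕ} [DecidablePred (ballEdge (S.req i) (S.ρ i))] (hi : 1 ≤ i)
    (hiN : i ≤ S.N) : S.ρ i ≤ #(F.filter (ballEdge (S.req i) (S.ρ i))) :=
  (hF.2.1 i hi hiN).le_card_filter_ballEdge hF.1 <| by
    have := S.rho_le_max hi hiN
    simp only [req]
    omega

end SquareRun

/-- If the quarter balls of the requests indexed by `R'` are pairwise
edge-disjoint, then every feasible solution has at least `Σ_{i∈R'} ρ(i)` edges;
in particular `|opt| ≥ Σ_{i∈R'} ρ(i)`. -/
theorem feasible_ge_sum_radii (S : SquareRun) (R' : Finset ℕ)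
    (hsub : R' ⊆ Finset.Icc 1 S.N)
    (hdisj : ∀ i ∈ R', ∀ j ∈ R', i ≠ j →
      BallsEdgeDisjoint (S.req i) (S.ρ i) (S.req j) (S.ρ j)) :
    ∀ F : Finset GEdge, S.Feasible F → ∑ i ∈ R', S.ρ i ≤ F.card := by
  classical
  intro F hF
  let ballEdges (i : ℕ) : Finset GEdge := F.filter (ballEdge (S.req i) (S.ρ i))
  have hpairwise : (R' : Set ℕ).PairwiseDisjoint ballEdges := fun i hi j hj hij =>
    disjoint_left.mpr fun e hei hej =>
      hdisj i hi j hj hij e ⟨(mem_filter.mp hei).2, (mem_filter.mp hej).2⟩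
  calc ∑ i ∈ R', S.ρ i
      ≤ ∑ i ∈ R', #(ballEdges i) := sum_le_sum fun i hi => by
        obtain ⟨hi, hiN⟩ := mem_Icc.mp (hsub hi)
        exact hF.rho_le_card_filter_ballEdge hi hiN
    _ = #(R'.biUnion ballEdges) := (card_biUnion hpairwise).symm
    _ ≤ #F := card_le_card <| biUnion_subset.mpr fun _ _ => filter_subset _ _
end

section
/- If there exists a replica (w,t_i) of the solution Square(i−1) with w ≤ v_i and v_i−w ≤ 5ρ(i), then request r_i is covered. -/
open Finset

theorem Repl_mono {F G : Finset GEdge} (h : F ⊆ G) : Repl F ⊆ Repl G :=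
  Set.insert_subset_insert fun _ ⟨e, he, hq⟩ => ⟨e, h he, hq⟩

theorem distInf_of_same_time {w v t : ℕ} (h : w ≤ v) :
    distInf (w, t) (v, t) = ((v - w : ℕ) : ℕ∞) := by
  simp [distInf, h]

namespace SquareRun

variable (S : SquareRun) {i w : ℕ}

theorem rho_le_of_mem_repl (hi1 : 1 ≤ i) (hiN : i ≤ S.N) (hwv : w ≤ S.v i)
    (hw : (w, S.t i) ∈ Repl (S.sol (i - 1) ∪ vertPath 0 (S.t (i - 1)) (S.t i))) :
    S.ρ i ≤ S.v i - w := by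
  have h := S.rho_min i hi1 hiN _ hw
  rwa [distInf_of_same_time hwv, Nat.cast_le] at h

theorem us_le_of_mem_repl (hi1 : 1 ≤ i) (hiN : i ≤ S.N) (hwv : w ≤ S.v i)
    (hw5 : S.v i - w ≤ 5 * S.ρ i)
    (hw : (w, S.t i) ∈ Repl (S.sol (i - 1) ∪ vertPath 0 (S.t (i - 1)) (S.t i))) :
    S.us i ≤ w :=
  S.serv_min i hi1 hiN _ hw ⟨by omega, hwv, Nat.sub_le _ _, le_rfl⟩

end SquareRun

/-- If `Square(i−1)` has a replica `(w, t_i)` with `0 ≤ v_i − w ≤ 5ρ(i)`, then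
request `r_i` is covered. -/
theorem covered_of_nearby_replica (S : SquareRun) (i : ℕ)
    (hi1 : 1 ≤ i) (hiN : i ≤ S.N)
    (h : ∃ w, w ≤ S.v i ∧ S.v i - w ≤ 5 * S.ρ i ∧
      (w, S.t i) ∈ Repl (S.sol (i - 1))) :
    S.covered i := by
  obtain ⟨w, hwv, hw5, hw⟩ := h
  have hw' : (w, S.t i) ∈ Repl (S.sol (i - 1) ∪ vertPath 0 (S.t (i - 1)) (S.t i)) :=
    Repl_mono subset_union_left hw
  calc S.ρ i ≤ S.v i - w := S.rho_le_of_mem_repl hi1 hiN hwv hw'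
    _ ≤ S.v i - S.us i := Nat.sub_le_sub_left (S.us_le_of_mem_repl hi1 hiN hwv hw5 hw') _
end
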